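/- Let R > 0 and let d : ℝ → ℝ be a C² function satisfying d(ψ + π/2) = π/2 − d(ψ) for all ψ. Set μ(ψ) = cos(2·d(ψ)) and define W(ψ) = −(π·R⁴/32)·sin²(2·d(ψ))·d′(ψ)² + (π·R⁴/192)·(3 − cos(4·d(ψ)))·d′(ψ)⁴ + (π·R⁴/128)·sin²(2·d(ψ))·d″(ψ)². Then ∫₀^π W(ψ) dψ = (π·R⁴/512)·∫₀^π (μ″(ψ)² − 4·μ′(ψ)²) dψ. -/

import Mathlib

/-!
Expressing `μ'` and `μ''` through `d`, the difference `(π R⁴ / 512) (μ''² - 4 μ'²) - W` is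
pointwise the derivative of `(π R⁴ / 192) sin (4d) d'³`. The symmetry `d (ψ + π/2) = π/2 - d ψ` makes `d`, hence this
antiderivative, `π`-periodic, so its integral over `[0, π]` vanishes.
-/

open Real Function intervalIntegral

theorem Function.periodic_two_mul_of_add_eq_sub {f : ℝ → ℝ} {a c : ℝ}
    (h : ∀ x, f (x + a) = c - f x) : Periodic f (2 * a) := fun x => by
  rw [two_mul, ← add_assoc, h, h, sub_sub_cancel]

theorem Function.Periodic.deriv {f : ℝ → ℝ} {T : ℝ} (h : Periodic f T) :
    Periodic (deriv f) T := fun x => by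
  rw [← deriv_comp_add_const, show (fun y => f (y + T)) = f from funext h]

theorem Function.Periodic.integral_eq_zero_of_hasDerivAt {F f : ℝ → ℝ} {T : ℝ}
    (hF : Periodic F T) (hderiv : ∀ x, HasDerivAt F (f x) x)
    (hf : IntervalIntegrable f MeasureTheory.volume 0 T) :
    ∫ x in (0 : ℝ)..T, f x = 0 := by
  rw [integral_eq_sub_of_hasDerivAt (fun x _ => hderiv x) hf, ← zero_add T, hF, sub_self]

section Derivatives

variable {d : ℝ → ℝ}

theorem hasDerivAt_cos_two_mul_comp {x : ℝ} (hd : DifferentiableAt ℝ d x) :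
    HasDerivAt (fun y => cos (2 * d y)) (-2 * sin (2 * d x) * deriv d x) x :=
  (hd.hasDerivAt.const_mul 2).cos.congr_deriv (by ring)

theorem deriv_cos_two_mul_comp (hd : Differentiable ℝ d) :
    deriv (fun y => cos (2 * d y)) = fun x => -2 * sin (2 * d x) * deriv d x :=
  funext fun x => (hasDerivAt_cos_two_mul_comp (hd x)).deriv

theorem deriv_deriv_cos_two_mul_comp (hd : Differentiable ℝ d)
    (hd' : Differentiable ℝ (deriv d)) :
    deriv (deriv fun y => cos (2 * d y)) = fun x =>
      -4 * cos (2 * d x) * deriv d x ^ 2 - 2 * sin (2 * d x) * deriv (deriv d) x := by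
  rw [deriv_cos_two_mul_comp hd]
  exact funext fun x => HasDerivAt.deriv <|
    ((((hd x).hasDerivAt.const_mul 2).sin.const_mul (-2)).mul (hd' x).hasDerivAt).congr_deriv
      (by ring)

theorem hasDerivAt_sin_four_mul_comp_mul_deriv_pow_three (hd : Differentiable ℝ d)
    (hd' : Differentiable ℝ (deriv d)) (x : ℝ) :
    HasDerivAt (fun y => sin (4 * d y) * deriv d y ^ 3)
      (4 * cos (4 * d x) * deriv d x ^ 4
        + 3 * sin (4 * d x) * deriv d x ^ 2 * deriv (deriv d) x) x :=
  (((hd x).hasDerivAt.const_mul 4).sin.mul ((hd' x).hasDerivAt.pow 3)).congr_deriv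
    (by simp only [Pi.pow_apply]; push_cast; ring)

end Derivatives

theorem integrand_sub_eq_deriv_sin_four_mul (k s p q : ℝ) :
    k / 512 * ((-4 * cos (2 * s) * p ^ 2 - 2 * sin (2 * s) * q) ^ 2
        - 4 * (-2 * sin (2 * s) * p) ^ 2)
      - (-(k / 32) * sin (2 * s) ^ 2 * p ^ 2 + k / 192 * (3 - cos (4 * s)) * p ^ 4
        + k / 128 * sin (2 * s) ^ 2 * q ^ 2)
      = k / 192 * (4 * cos (4 * s) * p ^ 4 + 3 * sin (4 * s) * p ^ 2 * q) := by
  have hcos : cos (4 * s) = 2 * cos (2 * s) ^ 2 - 1 := by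
    rw [show 4 * s = 2 * (2 * s) by ring, cos_two_mul]
  have hsin : sin (4 * s) = 2 * sin (2 * s) * cos (2 * s) := by
    rw [show 4 * s = 2 * (2 * s) by ring, sin_two_mul]
  rw [hcos, hsin]
  ring

theorem stmt_10_general (R : ℝ) (d : ℝ → ℝ) (hd : ContDiff ℝ 2 d)
    (hdsym : ∀ ψ : ℝ, d (ψ + Real.pi / 2) = Real.pi / 2 - d ψ)
    (μ : ℝ → ℝ) (hμ : μ = fun ψ => Real.cos (2 * d ψ))
    (W : ℝ → ℝ)
    (hW : ∀ ψ : ℝ, W ψ =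
      -(Real.pi * R ^ 4 / 32) * Real.sin (2 * d ψ) ^ 2 * (deriv d ψ) ^ 2
        + (Real.pi * R ^ 4 / 192) * (3 - Real.cos (4 * d ψ)) * (deriv d ψ) ^ 4
        + (Real.pi * R ^ 4 / 128) * Real.sin (2 * d ψ) ^ 2 * (deriv (deriv d) ψ) ^ 2) :
    ∫ ψ in (0:ℝ)..Real.pi, W ψ
      = (Real.pi * R ^ 4 / 512)
        * ∫ ψ in (0:ℝ)..Real.pi, ((deriv (deriv μ) ψ) ^ 2 - 4 * (deriv μ ψ) ^ 2) := by
  have hd₁ : Differentiable ℝ d := hd.differentiable two_ne_zero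
  have hd₂ : Differentiable ℝ (deriv d) := hd.differentiable_deriv_two
  have hd_cont : Continuous d := hd₁.continuous
  have hd'_cont : Continuous (deriv d) := hd₂.continuous
  have hd''_cont : Continuous (deriv (deriv d)) := (hd.deriv' (n := 1)).continuous_deriv le_rfl
  have hper : Periodic d π := by
    simpa [mul_div_cancel₀] using periodic_two_mul_of_add_eq_sub hdsym
  rw [hμ, deriv_deriv_cos_two_mul_comp hd₁ hd₂, deriv_cos_two_mul_comp hd₁,
    show W = _ from funext hW, eq_comm, ← sub_eq_zero, ← integral_const_mul,
    ← integral_sub (Continuous.intervalIntegrable (by fun_prop) _ _)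
    (Continuous.intervalIntegrable (by fun_prop) _ _)]
  simp_rw [integrand_sub_eq_deriv_sin_four_mul]
  refine Periodic.integral_eq_zero_of_hasDerivAt (F := fun y => π * R ^ 4 / 192 *
      (sin (4 * d y) * deriv d y ^ 3)) (fun x => ?_)
    (fun x => (hasDerivAt_sin_four_mul_comp_mul_deriv_pow_three hd₁ hd₂ x).const_mul _)
    (Continuous.intervalIntegrable (by fun_prop) _ _)
  simp only [hper x, hper.deriv x]

/-- Change of function `μ = cos (2 d)` and one more integration by parts:
`∫₀^π W = (π R⁴ / 512) ∫₀^π (μ''² − 4 μ'²)`. -/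
theorem stmt_10 (R : ℝ) (hR : 0 < R) (d : ℝ → ℝ) (hd : ContDiff ℝ 2 d)
    (hdsym : ∀ ψ : ℝ, d (ψ + Real.pi / 2) = Real.pi / 2 - d ψ)
    (μ : ℝ → ℝ) (hμ : μ = fun ψ => Real.cos (2 * d ψ))
    (W : ℝ → ℝ)
    (hW : ∀ ψ : ℝ, W ψ =
      -(Real.pi * R ^ 4 / 32) * Real.sin (2 * d ψ) ^ 2 * (deriv d ψ) ^ 2
        + (Real.pi * R ^ 4 / 192) * (3 - Real.cos (4 * d ψ)) * (deriv d ψ) ^ 4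
        + (Real.pi * R ^ 4 / 128) * Real.sin (2 * d ψ) ^ 2 * (deriv (deriv d) ψ) ^ 2) :
    ∫ ψ in (0:ℝ)..Real.pi, W ψ
      = (Real.pi * R ^ 4 / 512)
        * ∫ ψ in (0:ℝ)..Real.pi, ((deriv (deriv μ) ψ) ^ 2 - 4 * (deriv μ ψ) ^ 2) :=
  stmt_10_general R d hd hdsym μ hμ W hW
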